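/- Let (v_k) be a sequence in ℝ³ with Euclidean norm ‖v_k‖ = 1 converging to v, let t_k → +∞ be real numbers with t_k·|q(v_k)| → +∞, and let ε ∈ {−1, +1} be such that ε·q(v_k) ≥ 0 for all k. Let x ∈ ℝ³ satisfy ε·q(x) > 0 and b(x,v) > 0, and let x_k → x in ℝ³. For u ∈ [0,1] set D_k(u) = 1 + t_k·u·b(x_k, v_k) + (t_k²·u²/4)·q(v_k)·q(x_k) and x_k(u) = D_k(u)⁻¹·(u·x_k + (t_k·u²·q(x_k)/2)·v_k). Then there exists K such that for all k ≥ K one has D_k(u) > 0 for every u ∈ [0,1], and moreover sup_{u ∈ [0,1]} ‖x_k(u)‖ → 0 as k → ∞. -/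

import Mathlib

/-!
Write `b = b(x,v) > 0` and `c = q(v)·q(x) > 0`. Then `D(u) ≥ 1 + t·u·b + t²u²c/4`, and each
summand of the numerator of `x(u)` is controlled by one growing term of `D(u)`:
`u·‖x‖ / D ≤ ‖x‖/(t·b)` and `(t·u²·|q(x)|/2)·‖v‖ / D ≤ 2·|q(x)|·‖v‖/(t·c)`, uniformly in
`u ≥ 0`. Along the sequence, `t_k·b(x_k,v_k)` and `t_k·q(v_k)·q(x_k) = (t_k·|q(v_k)|)·|q(x_k)|`
tend to `+∞`, so both bounds tend to `0`.
-/

open Filter Topology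

noncomputable section

/-- The Lorentzian quadratic form `q(x) = 2x₁x₃ + x₂²` on Euclidean `ℝ³`. -/
def qE (x : EuclideanSpace ℝ (Fin 3)) : ℝ := 2 * x 0 * x 2 + (x 1) ^ 2

/-- The polar bilinear form `b(x,v) = x₁v₃ + x₂v₂ + x₃v₁` of `qE`. -/
def bE (x v : EuclideanSpace ℝ (Fin 3)) : ℝ := x 0 * v 2 + x 1 * v 1 + x 2 * v 0

/-- `D_k(u) = 1 + t·u·b(x,v) + (t²u²/4)·q(v)·q(x)`. -/
def Dk (t : ℝ) (x v : EuclideanSpace ℝ (Fin 3)) (u : ℝ) : ℝ :=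
  1 + t * u * bE x v + t ^ 2 * u ^ 2 / 4 * qE v * qE x

/-- `x_k(u) = D_k(u)⁻¹ · (u·x + (t·u²·q(x)/2)·v)`. -/
def Xk (t : ℝ) (x v : EuclideanSpace ℝ (Fin 3)) (u : ℝ) : EuclideanSpace ℝ (Fin 3) :=
  (Dk t x v u)⁻¹ • (u • x + (t * u ^ 2 * qE x / 2) • v)

theorem continuous_qE : Continuous qE := by
  unfold qE
  fun_prop

theorem continuous_bE :
    Continuous fun p : EuclideanSpace ℝ (Fin 3) × EuclideanSpace ℝ (Fin 3) => bE p.1 p.2 := by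
  unfold bE
  fun_prop

theorem mul_eq_abs_mul_abs_of_same_sign {ε a b : ℝ} (ha : 0 ≤ ε * a) (hb : 0 < ε * b) :
    a * b = |a| * |b| := by
  have hε : 0 < ε ^ 2 := sq_pos_iff.2 (left_ne_zero_of_mul hb.ne')
  have hab : 0 ≤ a * b :=
    nonneg_of_mul_nonneg_right (by nlinarith [mul_nonneg ha hb.le]) hε
  rw [← abs_mul, abs_of_nonneg hab]

theorem tendsto_iSup_of_le_of_tendsto_zero {α ι : Type*} [Nonempty ι] {l : Filter α}
    {f : α → ι → ℝ} {g : α → ℝ} (hf : ∀ a i, 0 ≤ f a i) (hfg : ∀ᶠ a in l, ∀ i, f a i ≤ g a)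
    (hg : Tendsto g l (𝓝 0)) :
    Tendsto (fun a => ⨆ i, f a i) l (𝓝 0) :=
  squeeze_zero' (Eventually.of_forall fun a => Real.iSup_nonneg (hf a))
    (hfg.mono fun _ h => ciSup_le h) hg

section Bounds

variable {t u : ℝ} {x v : EuclideanSpace ℝ (Fin 3)}

theorem Dk_pos (ht : 0 ≤ t) (hb : 0 ≤ bE x v) (hc : 0 ≤ qE v * qE x) (hu : 0 ≤ u) :
    0 < Dk t x v u := by
  unfold Dk
  nlinarith [mul_nonneg (mul_nonneg ht hu) hb,
    mul_nonneg (mul_nonneg (sq_nonneg t) (sq_nonneg u)) hc]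

theorem norm_smul_add_smul_le (hu : 0 ≤ u) (ht : 0 ≤ t) :
    ‖u • x + (t * u ^ 2 * qE x / 2) • v‖ ≤ u * ‖x‖ + t * u ^ 2 * |qE x| / 2 * ‖v‖ := by
  refine (norm_add_le _ _).trans_eq ?_
  rw [norm_smul, norm_smul, Real.norm_of_nonneg hu, Real.norm_eq_abs, abs_div, abs_mul,
    abs_of_nonneg (by positivity : 0 ≤ t * u ^ 2), abs_two]

theorem norm_Xk_le (ht : 0 < t) (hb : 0 < bE x v) (hc : 0 < qE v * qE x) (hu : 0 ≤ u) :
    ‖Xk t x v u‖ ≤ ‖x‖ / (t * bE x v) + 2 * |qE x| * ‖v‖ / (t * (qE v * qE x)) := by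
  have hD := Dk_pos ht.le hb.le hc.le hu
  have linear_part : u * ‖x‖ / Dk t x v u ≤ ‖x‖ / (t * bE x v) := by
    rw [div_le_div_iff₀ hD (by positivity)]
    unfold Dk
    nlinarith [norm_nonneg x,
      mul_nonneg (norm_nonneg x) (mul_nonneg (mul_nonneg (sq_nonneg t) (sq_nonneg u)) hc.le)]
  have quadratic_part : t * u ^ 2 * |qE x| / 2 * ‖v‖ / Dk t x v u ≤
      2 * |qE x| * ‖v‖ / (t * (qE v * qE x)) := by
    rw [div_le_div_iff₀ hD (by positivity)]
    unfold Dk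
    have hqv := mul_nonneg (abs_nonneg (qE x)) (norm_nonneg v)
    nlinarith [mul_nonneg hqv (mul_nonneg (mul_nonneg ht.le hu) hb.le)]
  calc ‖Xk t x v u‖ = ‖u • x + (t * u ^ 2 * qE x / 2) • v‖ / Dk t x v u := by
        rw [Xk, norm_smul, Real.norm_of_nonneg (inv_nonneg.2 hD.le), inv_mul_eq_div]
    _ ≤ (u * ‖x‖ + t * u ^ 2 * |qE x| / 2 * ‖v‖) / Dk t x v u := by
        gcongr
        exact norm_smul_add_smul_le hu ht.le
    _ = u * ‖x‖ / Dk t x v u + t * u ^ 2 * |qE x| / 2 * ‖v‖ / Dk t x v u := add_div _ _ _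
    _ ≤ _ := add_le_add linear_part quadratic_part

end Bounds

theorem stmt1_general (v : EuclideanSpace ℝ (Fin 3)) (vk : ℕ → EuclideanSpace ℝ (Fin 3))
    (hv : Tendsto vk atTop (𝓝 v))
    (t : ℕ → ℝ) (ht : Tendsto t atTop atTop)
    (htq : Tendsto (fun k => t k * |qE (vk k)|) atTop atTop)
    (ε : ℝ) (hsign : ∀ k, 0 ≤ ε * qE (vk k))
    (x : EuclideanSpace ℝ (Fin 3)) (hx : 0 < ε * qE x) (hbxv : 0 < bE x v)
    (xk : ℕ → EuclideanSpace ℝ (Fin 3)) (hxk : Tendsto xk atTop (𝓝 x)) :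
    (∃ K : ℕ, ∀ k ≥ K, ∀ u ∈ Set.Icc (0:ℝ) 1, 0 < Dk (t k) (xk k) (vk k) u) ∧
    Tendsto (fun k => ⨆ u : Set.Icc (0:ℝ) 1, ‖Xk (t k) (xk k) (vk k) (u : ℝ)‖)
      atTop (𝓝 0) := by
  have hq : Tendsto (fun k => qE (xk k)) atTop (𝓝 (qE x)) := (continuous_qE.tendsto x).comp hxk
  have hb : Tendsto (fun k => bE (xk k) (vk k)) atTop (𝓝 (bE x v)) :=
    (continuous_bE.tendsto (x, v)).comp (hxk.prodMk_nhds hv)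
  have htb : Tendsto (fun k => t k * bE (xk k) (vk k)) atTop atTop := ht.atTop_mul_pos hbxv hb
  have htc : Tendsto (fun k => t k * (qE (vk k) * qE (xk k))) atTop atTop := by
    refine (htq.atTop_mul_pos (abs_pos.2 (right_ne_zero_of_mul hx.ne')) hq.abs).congr' ?_
    filter_upwards [(tendsto_const_nhds.mul hq).eventually_const_lt hx] with k hk
    rw [mul_eq_abs_mul_abs_of_same_sign (hsign k) hk, mul_assoc]
  have bounds : ∀ᶠ k in atTop, ∀ u : ℝ, 0 ≤ u → 0 < Dk (t k) (xk k) (vk k) u ∧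
      ‖Xk (t k) (xk k) (vk k) u‖ ≤ ‖xk k‖ / (t k * bE (xk k) (vk k)) +
        2 * |qE (xk k)| * ‖vk k‖ / (t k * (qE (vk k) * qE (xk k))) := by
    filter_upwards [ht.eventually_gt_atTop 0, hb.eventually_const_lt hbxv,
      htc.eventually_gt_atTop 0] with k htk hbk htck
    have hck := pos_of_mul_pos_right htck htk.le
    exact fun u hu => ⟨Dk_pos htk.le hbk.le hck.le hu, norm_Xk_le htk hbk hck hu⟩
  refine ⟨?_, ?_⟩
  · obtain ⟨K, hK⟩ := eventually_atTop.1 bounds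
    exact ⟨K, fun k hk u hu => (hK k hk u hu.1).1⟩
  · have : Nonempty (Set.Icc (0:ℝ) 1) := ⟨⟨0, le_rfl, zero_le_one⟩⟩
    refine tendsto_iSup_of_le_of_tendsto_zero (fun _ _ => norm_nonneg _)
      (bounds.mono fun k hk u => (hk u u.2.1).2) ?_
    simpa using (hxk.norm.div_atTop htb).add
      (((tendsto_const_nhds (x := (2 : ℝ))).mul hq.abs).mul hv.norm |>.div_atTop htc)

theorem stmt1 (v : EuclideanSpace ℝ (Fin 3)) (vk : ℕ → EuclideanSpace ℝ (Fin 3))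
    (hnorm : ∀ k, ‖vk k‖ = 1)
    (hv : Tendsto vk atTop (𝓝 v))
    (t : ℕ → ℝ) (ht : Tendsto t atTop atTop)
    (htq : Tendsto (fun k => t k * |qE (vk k)|) atTop atTop)
    (ε : ℝ) (hε : ε = 1 ∨ ε = -1) (hsign : ∀ k, 0 ≤ ε * qE (vk k))
    (x : EuclideanSpace ℝ (Fin 3)) (hx : 0 < ε * qE x) (hbxv : 0 < bE x v)
    (xk : ℕ → EuclideanSpace ℝ (Fin 3)) (hxk : Tendsto xk atTop (𝓝 x)) :
    (∃ K : ℕ, ∀ k ≥ K, ∀ u ∈ Set.Icc (0:ℝ) 1, 0 < Dk (t k) (xk k) (vk k) u) ∧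
    Tendsto (fun k => ⨆ u : Set.Icc (0:ℝ) 1, ‖Xk (t k) (xk k) (vk k) (u : ℝ)‖)
      atTop (𝓝 0) :=
  stmt1_general v vk hv t ht htq ε hsign x hx hbxv xk hxk
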